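/- Let s ∈ ℤ and let f be a complex-valued twice continuously differentiable function of (θ, φ) ∈ (0,π) × ℝ. Then at every point of (0,π) × ℝ the operators satisfy the so(3) commutation relations: Z̃₁(Z̃₂f) − Z̃₂(Z̃₁f) = Z̃₃f, Z̃₂(Z̃₃f) − Z̃₃(Z̃₂f) = Z̃₁f, and Z̃₃(Z̃₁f) − Z̃₁(Z̃₃f) = Z̃₂f. -/

import Mathlib

open Set

/-- The spin `s`-weighted angular operator `Z̃₁`. -/
noncomputable def Zt1 (s : ℤ) (f : ℝ → ℝ → ℂ) : ℝ → ℝ → ℂ := fun θ φ =>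
  -(Real.sin φ : ℂ) * deriv (fun t => f t φ) θ +
    (Real.cos φ : ℂ) *
      (-(Complex.I * (s : ℂ) * f θ φ) / (Real.sin θ : ℂ) -
        ((Real.cos θ : ℂ) / (Real.sin θ : ℂ)) * deriv (fun p => f θ p) φ)

/-- The spin `s`-weighted angular operator `Z̃₂`. -/
noncomputable def Zt2 (s : ℤ) (f : ℝ → ℝ → ℂ) : ℝ → ℝ → ℂ := fun θ φ =>
  -(Real.cos φ : ℂ) * deriv (fun t => f t φ) θ -
    (Real.sin φ : ℂ) *
      (-(Complex.I * (s : ℂ) * f θ φ) / (Real.sin θ : ℂ) -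
        ((Real.cos θ : ℂ) / (Real.sin θ : ℂ)) * deriv (fun p => f θ p) φ)

/-- The angular operator `Z̃₃ = ∂_φ`. -/
noncomputable def Zt3 (f : ℝ → ℝ → ℂ) : ℝ → ℝ → ℂ := fun θ φ => deriv (fun p => f θ p) φ

set_option maxHeartbeats 1600000 in
/-- The spin-weighted angular operators satisfy the `so(3)` commutation
relations on twice continuously differentiable functions on `(0,π) × ℝ`. -/
theorem stmt_11 (s : ℤ) (f : ℝ → ℝ → ℂ)
    (hf : ContDiffOn ℝ 2 (fun p : ℝ × ℝ => f p.1 p.2)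
      (Ioo (0 : ℝ) Real.pi ×ˢ (univ : Set ℝ))) :
    ∀ θ ∈ Ioo (0 : ℝ) Real.pi, ∀ φ : ℝ,
      Zt1 s (Zt2 s f) θ φ - Zt2 s (Zt1 s f) θ φ = Zt3 f θ φ ∧
      Zt2 s (Zt3 f) θ φ - Zt3 (Zt2 s f) θ φ = Zt1 s f θ φ ∧
      Zt3 (Zt1 s f) θ φ - Zt1 s (Zt3 f) θ φ = Zt2 s f θ φ := by
  intro θ hθ φ
  set U : Set (ℝ × ℝ) := Ioo (0:ℝ) Real.pi ×ˢ (univ : Set ℝ) with hU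
  have hUo : IsOpen U := isOpen_Ioo.prod isOpen_univ
  set F : ℝ × ℝ → ℂ := fun p => f p.1 p.2 with hF
  have hC : ∀ q ∈ U, ContDiffAt ℝ 2 F q := fun q hq => hf.contDiffAt (hUo.mem_nhds hq)
  have hdF : ∀ q ∈ U, HasFDerivAt F (fderiv ℝ F q) q := fun q hq =>
    ((hC q hq).differentiableAt (by norm_num)).hasFDerivAt
  have hdF' : ∀ q ∈ U, HasFDerivAt (fderiv ℝ F) (fderiv ℝ (fderiv ℝ F) q) q := fun q hq =>
    (((hC q hq).fderiv_right (m := 1) (by norm_num)).differentiableAt (by norm_num)).hasFDerivAt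
  have hline1 : ∀ (z t : ℝ), HasDerivAt (fun t' : ℝ => ((t', z) : ℝ × ℝ)) (1, 0) t :=
    fun z t => (hasDerivAt_id t).prodMk (hasDerivAt_const t z)
  have hline2 : ∀ (t z : ℝ), HasDerivAt (fun z' : ℝ => ((t, z') : ℝ × ℝ)) (0, 1) z :=
    fun t z => (hasDerivAt_const z t).prodMk (hasDerivAt_id z)
  have g1 : ∀ x ∈ Ioo (0:ℝ) Real.pi, ∀ y : ℝ,
      HasDerivAt (fun t => f t y) (fderiv ℝ F (x, y) (1, 0)) x := fun x hx y =>
    by have := ((hdF (x, y) ⟨hx, trivial⟩).comp_hasDerivAt x (hline1 y x)); exact this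
  have g2 : ∀ x ∈ Ioo (0:ℝ) Real.pi, ∀ y : ℝ,
      HasDerivAt (fun z => f x z) (fderiv ℝ F (x, y) (0, 1)) y := fun x hx y =>
    ((hdF (x, y) ⟨hx, trivial⟩).comp_hasDerivAt y (hline2 x y))
  have h3 : ∀ x ∈ Ioo (0:ℝ) Real.pi, ∀ y : ℝ, ∀ w : ℝ × ℝ,
      HasDerivAt (fun t => fderiv ℝ F (t, y) w) (fderiv ℝ (fderiv ℝ F) (x, y) (1, 0) w) x := by
    intro x hx y w
    have h := (hdF' (x, y) ⟨hx, trivial⟩).comp_hasDerivAt x (hline1 y x)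
    simpa using h.clm_apply (hasDerivAt_const x w)
  have h4 : ∀ x ∈ Ioo (0:ℝ) Real.pi, ∀ y : ℝ, ∀ w : ℝ × ℝ,
      HasDerivAt (fun z => fderiv ℝ F (x, z) w) (fderiv ℝ (fderiv ℝ F) (x, y) (0, 1) w) y := by
    intro x hx y w
    have h := (hdF' (x, y) ⟨hx, trivial⟩).comp_hasDerivAt y (hline2 x y)
    simpa using h.clm_apply (hasDerivAt_const y w)
  have hsymm : fderiv ℝ (fderiv ℝ F) (θ, φ) (1,0) (0,1)
      = fderiv ℝ (fderiv ℝ F) (θ, φ) (0,1) (1,0) := by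
    have hev : ∀ᶠ q in nhds ((θ, φ) : ℝ × ℝ), HasFDerivAt F (fderiv ℝ F q) q :=
      Filter.eventually_of_mem (hUo.mem_nhds ⟨hθ, trivial⟩) hdF
    exact second_derivative_symmetric_of_eventually hev (hdF' (θ, φ) ⟨hθ, trivial⟩) _ _
  -- explicit formulas on U
  have e1 : ∀ x ∈ Ioo (0:ℝ) Real.pi, ∀ y : ℝ, Zt1 s f x y =
      -(Real.sin y : ℂ) * fderiv ℝ F (x, y) (1, 0) +
        (Real.cos y : ℂ) *
          (-(Complex.I * (s : ℂ) * f x y) / (Real.sin x : ℂ) -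
            ((Real.cos x : ℂ) / (Real.sin x : ℂ)) * fderiv ℝ F (x, y) (0, 1)) := by
    intro x hx y
    rw [Zt1, (g1 x hx y).deriv, (g2 x hx y).deriv]
  have e2 : ∀ x ∈ Ioo (0:ℝ) Real.pi, ∀ y : ℝ, Zt2 s f x y =
      -(Real.cos y : ℂ) * fderiv ℝ F (x, y) (1, 0) -
        (Real.sin y : ℂ) *
          (-(Complex.I * (s : ℂ) * f x y) / (Real.sin x : ℂ) -
            ((Real.cos x : ℂ) / (Real.sin x : ℂ)) * fderiv ℝ F (x, y) (0, 1)) := by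
    intro x hx y
    rw [Zt2, (g1 x hx y).deriv, (g2 x hx y).deriv]
  have e3 : ∀ x ∈ Ioo (0:ℝ) Real.pi, ∀ y : ℝ, Zt3 f x y = fderiv ℝ F (x, y) (0, 1) := by
    intro x hx y
    rw [Zt3, (g2 x hx y).deriv]
  -- basic analytic facts at (θ, φ)
  have hsθ : Real.sin θ ≠ 0 := (Real.sin_pos_of_pos_of_lt_pi hθ.1 hθ.2).ne'
  have hsθC : (Real.sin θ : ℂ) ≠ 0 := Complex.ofReal_ne_zero.mpr hsθ
  have hmem : Ioo (0:ℝ) Real.pi ∈ nhds θ := Ioo_mem_nhds hθ.1 hθ.2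
  have hsin : HasDerivAt (fun t : ℝ => ((Real.sin t : ℝ) : ℂ)) (Real.cos θ) θ :=
    (Real.hasDerivAt_sin θ).ofReal_comp
  have hcos : HasDerivAt (fun t : ℝ => ((Real.cos t : ℝ) : ℂ)) (-(Real.sin θ : ℂ)) θ := by
    simpa using (Real.hasDerivAt_cos θ).ofReal_comp
  have hsin' : HasDerivAt (fun z : ℝ => ((Real.sin z : ℝ) : ℂ)) (Real.cos φ) φ :=
    (Real.hasDerivAt_sin φ).ofReal_comp
  have hcos' : HasDerivAt (fun z : ℝ => ((Real.cos z : ℝ) : ℂ)) (-(Real.sin φ : ℂ)) φ := by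
    simpa using (Real.hasDerivAt_cos φ).ofReal_comp
  have hA := h3 θ hθ φ (1, 0)
  have hB := h3 θ hθ φ (0, 1)
  have hAz := h4 θ hθ φ (1, 0)
  have hBz := h4 θ hθ φ (0, 1)
  have hft := g1 θ hθ φ
  have hfz := g2 θ hθ φ
  -- θ-derivative of Zt1
  have D1θ :=
    (((HasDerivAt.const_mul (-(Real.sin φ : ℂ)) hA).add
      (HasDerivAt.const_mul (Real.cos φ : ℂ)
        ((((HasDerivAt.const_mul (Complex.I * (s : ℂ)) hft).neg).div hsin hsθC).sub
          ((hcos.div hsin hsθC).mul hB)))).congr_of_eventuallyEq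
      (Filter.eventually_of_mem hmem (fun t ht => e1 t ht φ)))
  -- θ-derivative of Zt2
  have D2θ :=
    (((HasDerivAt.const_mul (-(Real.cos φ : ℂ)) hA).sub
      (HasDerivAt.const_mul (Real.sin φ : ℂ)
        ((((HasDerivAt.const_mul (Complex.I * (s : ℂ)) hft).neg).div hsin hsθC).sub
          ((hcos.div hsin hsθC).mul hB)))).congr_of_eventuallyEq
      (Filter.eventually_of_mem hmem (fun t ht => e2 t ht φ)))
  -- θ-derivative of Zt3
  have D3θ := hB.congr_of_eventuallyEq
      (Filter.eventually_of_mem hmem (fun t ht => e3 t ht φ))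
  -- φ-derivative of Zt1
  have D1φ :=
    ((hsin'.neg.mul hAz).add
      (hcos'.mul
        (((((HasDerivAt.const_mul (Complex.I * (s : ℂ)) hfz).neg).div_const (Real.sin θ : ℂ))).sub
          (HasDerivAt.const_mul ((Real.cos θ : ℂ) / (Real.sin θ : ℂ)) hBz)))).congr_of_eventuallyEq
      (Filter.Eventually.of_forall (fun z => e1 θ hθ z))
  -- φ-derivative of Zt2
  have D2φ :=
    (((hcos'.neg).mul hAz).sub
      (hsin'.mul
        (((((HasDerivAt.const_mul (Complex.I * (s : ℂ)) hfz).neg).div_const (Real.sin θ : ℂ))).sub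
          (HasDerivAt.const_mul ((Real.cos θ : ℂ) / (Real.sin θ : ℂ)) hBz)))).congr_of_eventuallyEq
      (Filter.Eventually.of_forall (fun z => e2 θ hθ z))
  -- φ-derivative of Zt3
  have D3φ := hBz.congr_of_eventuallyEq (Filter.Eventually.of_forall (fun z => e3 θ hθ z))
  have t1 : ((Real.sin φ : ℂ))^2 + ((Real.cos φ : ℂ))^2 = 1 := by
    norm_cast; exact Real.sin_sq_add_cos_sq φ
  have t2 : ((Real.sin θ : ℂ))^2 + ((Real.cos θ : ℂ))^2 = 1 := by
    norm_cast; exact Real.sin_sq_add_cos_sq θ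
  have hsC : Complex.sin (θ:ℂ) ≠ 0 := by
    rwa [← Complex.ofReal_sin, Ne, Complex.ofReal_eq_zero]
  have hb : -(Real.sin θ : ℂ) * (Real.sin θ : ℂ) -
      (Real.cos θ : ℂ) * (Real.cos θ : ℂ) = -1 := by linear_combination -t2
  -- cleaned-up derivative values
  have D1θ' : HasDerivAt (fun t => Zt1 s f t φ)
      (-(Real.sin φ : ℂ) * fderiv ℝ (fderiv ℝ F) (θ, φ) (1, 0) (1, 0) +
        (Real.cos φ : ℂ) *
          (-(Complex.I * (s : ℂ) * fderiv ℝ F (θ, φ) (1, 0)) / (Real.sin θ : ℂ) +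
            Complex.I * (s : ℂ) * f θ φ * (Real.cos θ : ℂ) / (Real.sin θ : ℂ) ^ 2 +
            fderiv ℝ F (θ, φ) (0, 1) / (Real.sin θ : ℂ) ^ 2 -
            ((Real.cos θ : ℂ) / (Real.sin θ : ℂ)) * fderiv ℝ (fderiv ℝ F) (θ, φ) (0, 1) (1, 0))) θ := by
    refine D1θ.congr_deriv ?_
    rw [hsymm, hb]
    simp only [Pi.neg_apply, Pi.sub_apply, Pi.mul_apply, Pi.div_apply]
    field_simp [hsC]
    ring
  have D2θ' : HasDerivAt (fun t => Zt2 s f t φ)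
      (-(Real.cos φ : ℂ) * fderiv ℝ (fderiv ℝ F) (θ, φ) (1, 0) (1, 0) -
        (Real.sin φ : ℂ) *
          (-(Complex.I * (s : ℂ) * fderiv ℝ F (θ, φ) (1, 0)) / (Real.sin θ : ℂ) +
            Complex.I * (s : ℂ) * f θ φ * (Real.cos θ : ℂ) / (Real.sin θ : ℂ) ^ 2 +
            fderiv ℝ F (θ, φ) (0, 1) / (Real.sin θ : ℂ) ^ 2 -
            ((Real.cos θ : ℂ) / (Real.sin θ : ℂ)) * fderiv ℝ (fderiv ℝ F) (θ, φ) (0, 1) (1, 0))) θ := by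
    refine D2θ.congr_deriv ?_
    rw [hsymm, hb]
    simp only [Pi.neg_apply, Pi.sub_apply, Pi.mul_apply, Pi.div_apply]
    field_simp [hsC]
    ring
  have D1φ' : HasDerivAt (fun z => Zt1 s f θ z)
      (-(Real.cos φ : ℂ) * fderiv ℝ F (θ, φ) (1, 0) -
        (Real.sin φ : ℂ) * fderiv ℝ (fderiv ℝ F) (θ, φ) (0, 1) (1, 0) -
        (Real.sin φ : ℂ) *
          (-(Complex.I * (s : ℂ) * f θ φ) / (Real.sin θ : ℂ) -
            ((Real.cos θ : ℂ) / (Real.sin θ : ℂ)) * fderiv ℝ F (θ, φ) (0, 1)) +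
        (Real.cos φ : ℂ) *
          (-(Complex.I * (s : ℂ) * fderiv ℝ F (θ, φ) (0, 1)) / (Real.sin θ : ℂ) -
            ((Real.cos θ : ℂ) / (Real.sin θ : ℂ)) * fderiv ℝ (fderiv ℝ F) (θ, φ) (0, 1) (0, 1))) φ := by
    refine D1φ.congr_deriv ?_
    simp only [Pi.neg_apply, Pi.sub_apply, Pi.mul_apply, Pi.div_apply]
    field_simp [hsC]
    ring
  have D2φ' : HasDerivAt (fun z => Zt2 s f θ z)
      ((Real.sin φ : ℂ) * fderiv ℝ F (θ, φ) (1, 0) -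
        (Real.cos φ : ℂ) * fderiv ℝ (fderiv ℝ F) (θ, φ) (0, 1) (1, 0) -
        (Real.cos φ : ℂ) *
          (-(Complex.I * (s : ℂ) * f θ φ) / (Real.sin θ : ℂ) -
            ((Real.cos θ : ℂ) / (Real.sin θ : ℂ)) * fderiv ℝ F (θ, φ) (0, 1)) -
        (Real.sin φ : ℂ) *
          (-(Complex.I * (s : ℂ) * fderiv ℝ F (θ, φ) (0, 1)) / (Real.sin θ : ℂ) -
            ((Real.cos θ : ℂ) / (Real.sin θ : ℂ)) * fderiv ℝ (fderiv ℝ F) (θ, φ) (0, 1) (0, 1))) φ := by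
    refine D2φ.congr_deriv ?_
    simp only [Pi.neg_apply, Pi.sub_apply, Pi.mul_apply, Pi.div_apply]
    field_simp [hsC]
    ring
  refine ⟨?_, ?_, ?_⟩
  · have L : Zt1 s (Zt2 s f) θ φ =
        -(Real.sin φ : ℂ) * deriv (fun t => Zt2 s f t φ) θ +
          (Real.cos φ : ℂ) *
            (-(Complex.I * (s : ℂ) * Zt2 s f θ φ) / (Real.sin θ : ℂ) -
              ((Real.cos θ : ℂ) / (Real.sin θ : ℂ)) * deriv (fun p => Zt2 s f θ p) φ) := rfl
    have R : Zt2 s (Zt1 s f) θ φ =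
        -(Real.cos φ : ℂ) * deriv (fun t => Zt1 s f t φ) θ -
          (Real.sin φ : ℂ) *
            (-(Complex.I * (s : ℂ) * Zt1 s f θ φ) / (Real.sin θ : ℂ) -
              ((Real.cos θ : ℂ) / (Real.sin θ : ℂ)) * deriv (fun p => Zt1 s f θ p) φ) := rfl
    rw [L, R, D2θ'.deriv, D2φ'.deriv, D1θ'.deriv, D1φ'.deriv, e1 θ hθ φ, e2 θ hθ φ, e3 θ hθ φ]
    have hC2 : (1 : ℂ) - (Real.cos θ : ℂ) ^ 2 = (Real.sin θ : ℂ) ^ 2 := by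
      linear_combination -t2
    trans (((Real.sin φ : ℂ) ^ 2 + (Real.cos φ : ℂ) ^ 2) *
      ((1 - (Real.cos θ : ℂ) ^ 2) * fderiv ℝ F (θ, φ) (0, 1)) / (Real.sin θ : ℂ) ^ 2)
    · ring
    · rw [t1, hC2, one_mul]
      field_simp [hsC]
  · have L : Zt2 s (Zt3 f) θ φ =
        -(Real.cos φ : ℂ) * deriv (fun t => Zt3 f t φ) θ -
          (Real.sin φ : ℂ) *
            (-(Complex.I * (s : ℂ) * Zt3 f θ φ) / (Real.sin θ : ℂ) -
              ((Real.cos θ : ℂ) / (Real.sin θ : ℂ)) * deriv (fun p => Zt3 f θ p) φ) := rfl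
    have R : Zt3 (Zt2 s f) θ φ = deriv (fun p => Zt2 s f θ p) φ := rfl
    rw [L, R, D3θ.deriv, D3φ.deriv, D2φ.deriv, e1 θ hθ φ, e3 θ hθ φ, hsymm]
    simp only [Pi.neg_apply, Pi.sub_apply]
    field_simp [hsC]
    ring_nf
  · have L : Zt3 (Zt1 s f) θ φ = deriv (fun p => Zt1 s f θ p) φ := rfl
    have R : Zt1 s (Zt3 f) θ φ =
        -(Real.sin φ : ℂ) * deriv (fun t => Zt3 f t φ) θ +
          (Real.cos φ : ℂ) *
            (-(Complex.I * (s : ℂ) * Zt3 f θ φ) / (Real.sin θ : ℂ) -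
              ((Real.cos θ : ℂ) / (Real.sin θ : ℂ)) * deriv (fun p => Zt3 f θ p) φ) := rfl
    rw [L, R, D1φ.deriv, D3θ.deriv, D3φ.deriv, e2 θ hθ φ, e3 θ hθ φ, hsymm]
    simp only [Pi.neg_apply, Pi.sub_apply]
    field_simp [hsC]
    ring_nf
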